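/- arXiv:2302.06252 — 2 statements merged into one kernel-verified Lean document; each statement's English description precedes it below -/
import Mathlib

section
/- For every alphabet Σ, every cost function δ : Σ × Σ → ℝ≥0, all nonempty strings S, T over Σ and all letters s, t ∈ Σ, the Dynamic Time Warping distance satisfies the recurrence DTW(S ++ [s], T ++ [t]) = δ(s,t) + min( DTW(S, T ++ [t]), DTW(S ++ [s], T), DTW(S, T) ). -/
/-! A time-warp of `S ++ [s]` is a time-warp of `S` followed by a nonempty run of `s`, so every
alignment of `S ++ [s]` with `T ++ [t]` ends with the pair `(s, t)`. Removing that pair leaves an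
alignment of `S` or `S ++ [s]` (as the run of `s` had length one or more) with `T` or `T ++ [t]`;
if both runs were longer, removing pairs can only lower the cost, and we repeat. Conversely,
appending `(s, t)` to an alignment of any of the three shorter pairs gives one of `S ++ [s]` with
`T ++ [t]`. -/

/-- `S'` is a time-warp of `S`: each letter of `S` is replaced by a positive
number of consecutive copies of itself. -/
def IsTimeWarp {α : Type*} (S S' : List α) : Prop :=
  ∃ ℓ : List ℕ, ℓ.length = S.length ∧ (∀ x ∈ ℓ, 0 < x) ∧
    S' = (List.zipWith List.replicate ℓ S).flatten

/-- The Dynamic Time Warping distance of `S` and `T` with respect to the cost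
function `δ`: the infimum over all equal-length pairs of time-warps `S'`, `T'`
of the sum of letterwise costs. -/
noncomputable def DTW {α : Type*} (δ : α → α → NNReal) (S T : List α) : ENNReal :=
  ⨅ p ∈ {q : List α × List α |
      IsTimeWarp S q.1 ∧ IsTimeWarp T q.2 ∧ q.1.length = q.2.length},
    ((List.zipWith δ p.1 p.2).sum : ENNReal)

section

open List

variable {α : Type*}

theorem isTimeWarp_append_singleton_iff {S U : List α} {s : α} :
    IsTimeWarp (S ++ [s]) U ↔ ∃ V k, IsTimeWarp S V ∧ U = V ++ replicate (k + 1) s := by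
  constructor
  · rintro ⟨ℓ, hlen, hpos, rfl⟩
    obtain rfl | ⟨ℓ₀, k, rfl⟩ := eq_nil_or_concat ℓ
    · simp at hlen
    · rw [concat_eq_append, length_append, length_append, length_singleton,
        length_singleton, Nat.add_right_cancel_iff] at hlen
      have hk : 0 < k := hpos k (by simp)
      refine ⟨(zipWith replicate ℓ₀ S).flatten, k - 1,
        ⟨ℓ₀, hlen, fun x hx => hpos x (by simp [hx]), rfl⟩, ?_⟩
      simp [zipWith_append hlen, Nat.sub_add_cancel hk]
  · rintro ⟨_, k, ⟨ℓ, hlen, hpos, rfl⟩, rfl⟩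
    refine ⟨ℓ ++ [k + 1], by simp [hlen], ?_, by simp [zipWith_append hlen]⟩
    intro x hx
    rw [mem_append, mem_singleton] at hx
    obtain hx | rfl := hx
    exacts [hpos x hx, Nat.succ_pos k]

theorem IsTimeWarp.append_singleton {S V : List α} (h : IsTimeWarp S V) (s : α) :
    IsTimeWarp (S ++ [s]) (V ++ [s]) :=
  isTimeWarp_append_singleton_iff.2 ⟨V, 0, h, rfl⟩

theorem IsTimeWarp.append_last {S U : List α} {s : α} (h : IsTimeWarp (S ++ [s]) U) :
    IsTimeWarp (S ++ [s]) (U ++ [s]) := by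
  obtain ⟨V, k, hV, rfl⟩ := isTimeWarp_append_singleton_iff.1 h
  exact isTimeWarp_append_singleton_iff.2
    ⟨V, k + 1, hV, by rw [append_assoc, ← replicate_succ']⟩

theorem IsTimeWarp.append_replicate_succ {S V : List α} (h : IsTimeWarp S V) (s : α) (k : ℕ) :
    IsTimeWarp (S ++ [s]) (V ++ replicate (k + 1) s) :=
  isTimeWarp_append_singleton_iff.2 ⟨V, k, h, rfl⟩

theorem dtw_le_sum {δ : α → α → NNReal} {S T a b : List α}
    (ha : IsTimeWarp S a) (hb : IsTimeWarp T b) (hab : a.length = b.length) :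
    DTW δ S T ≤ ((zipWith δ a b).sum : ENNReal) :=
  iInf₂_le (a, b) ⟨ha, hb, hab⟩

theorem sum_zipWith_append_singleton (δ : α → α → NNReal) {a b : List α}
    (hab : a.length = b.length) (x y : α) :
    ((zipWith δ (a ++ [x]) (b ++ [y])).sum : ENNReal) =
      δ x y + ((zipWith δ a b).sum : ENNReal) := by
  simp [zipWith_append hab, add_comm]

theorem dtw_append_singleton_le_add (δ : α → α → NNReal) {S T A B : List α} {s t : α}
    (hA : ∀ a, IsTimeWarp A a → IsTimeWarp (S ++ [s]) (a ++ [s]))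
    (hB : ∀ b, IsTimeWarp B b → IsTimeWarp (T ++ [t]) (b ++ [t])) :
    DTW δ (S ++ [s]) (T ++ [t]) ≤ δ s t + DTW δ A B := by
  simp only [DTW, ENNReal.add_iInf]
  refine le_iInf₂ fun p ⟨ha, hb, hab⟩ => ?_
  rw [← sum_zipWith_append_singleton δ hab]
  exact dtw_le_sum (hA _ ha) (hB _ hb) (by simp [hab])

theorem dtw_append_singleton_le (δ : α → α → NNReal) (S T : List α) (s t : α) :
    DTW δ (S ++ [s]) (T ++ [t]) ≤
      δ s t + min (min (DTW δ S (T ++ [t])) (DTW δ (S ++ [s]) T)) (DTW δ S T) := by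
  rw [← min_add_add_left, ← min_add_add_left]
  refine le_min (le_min ?_ ?_) ?_
  · exact dtw_append_singleton_le_add δ (fun a ha => ha.append_singleton s)
      fun b hb => hb.append_last
  · exact dtw_append_singleton_le_add δ (fun a ha => ha.append_last)
      fun b hb => hb.append_singleton t
  · exact dtw_append_singleton_le_add δ (fun a ha => ha.append_singleton s)
      fun b hb => hb.append_singleton t

theorem length_append_replicate_eq_of_succ {V W : List α} {s t : α} {k m : ℕ}
    (hlen : (V ++ replicate (k + 1) s).length = (W ++ replicate (m + 1) t).length) :
    (V ++ replicate k s).length = (W ++ replicate m t).length := by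
  simp only [length_append, length_replicate] at hlen ⊢
  omega

theorem sum_zipWith_append_replicate_succ (δ : α → α → NNReal) {V W : List α} {s t : α}
    {k m : ℕ} (hlen : (V ++ replicate (k + 1) s).length = (W ++ replicate (m + 1) t).length) :
    ((zipWith δ (V ++ replicate (k + 1) s) (W ++ replicate (m + 1) t)).sum : ENNReal) =
      δ s t + ((zipWith δ (V ++ replicate k s) (W ++ replicate m t)).sum : ENNReal) := by
  simp only [replicate_succ', ← append_assoc]
  exact sum_zipWith_append_singleton δ (length_append_replicate_eq_of_succ hlen) s t

theorem min_dtw_le_sum (δ : α → α → NNReal) {S T V W : List α} {s t : α}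
    (hV : IsTimeWarp S V) (hW : IsTimeWarp T W) (k m : ℕ)
    (hlen : (V ++ replicate k s).length = (W ++ replicate m t).length) :
    min (min (DTW δ S (T ++ [t])) (DTW δ (S ++ [s]) T)) (DTW δ S T) ≤
      ((zipWith δ (V ++ replicate k s) (W ++ replicate m t)).sum : ENNReal) := by
  induction k generalizing m with
  | zero =>
    rw [replicate_zero, append_nil] at hlen ⊢
    cases m with
    | zero =>
      rw [replicate_zero, append_nil] at hlen ⊢
      exact min_le_of_right_le (dtw_le_sum hV hW hlen)
    | succ m =>
      exact min_le_of_left_le <| min_le_of_left_le <|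
        dtw_le_sum hV (hW.append_replicate_succ t m) hlen
  | succ k ih =>
    cases m with
    | zero =>
      rw [replicate_zero, append_nil] at hlen ⊢
      exact min_le_of_left_le <| min_le_of_right_le <|
        dtw_le_sum (hV.append_replicate_succ s k) hW hlen
    | succ m =>
      rw [sum_zipWith_append_replicate_succ δ hlen]
      exact le_add_left (ih m (length_append_replicate_eq_of_succ hlen))

end

theorem dtw_recurrence_general {α : Type*} (δ : α → α → NNReal) (S T : List α)
    (s t : α) :
    DTW δ (S ++ [s]) (T ++ [t]) =
      (δ s t : ENNReal) +
        min (min (DTW δ S (T ++ [t])) (DTW δ (S ++ [s]) T)) (DTW δ S T) := by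
  refine le_antisymm (dtw_append_singleton_le δ S T s t)
    (le_iInf₂ fun ⟨_, _⟩ ⟨hS', hT', hlen⟩ => ?_)
  obtain ⟨V, k, hV, rfl⟩ := isTimeWarp_append_singleton_iff.1 hS'
  obtain ⟨W, m, hW, rfl⟩ := isTimeWarp_append_singleton_iff.1 hT'
  rw [sum_zipWith_append_replicate_succ δ hlen]
  gcongr
  exact min_dtw_le_sum δ hV hW k m (length_append_replicate_eq_of_succ hlen)

theorem dtw_recurrence {α : Type*} (δ : α → α → NNReal) (S T : List α)
    (hS : S ≠ []) (hT : T ≠ []) (s t : α) :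
    DTW δ (S ++ [s]) (T ++ [t]) =
      (δ s t : ENNReal) +
        min (min (DTW δ S (T ++ [t])) (DTW δ (S ++ [s]) T)) (DTW δ S T) :=
  dtw_recurrence_general δ S T s t
end

section
/- Let S, T be nonempty strings of lengths N and M over an alphabet Σ with cost function δ : Σ × Σ → ℝ≥0, and let w(i,j) = δ(S[i], T[j]) (1-based indexing) for 1 ≤ i ≤ N, 1 ≤ j ≤ M. Then DTW(S, T) = D(N, M), where D is defined by the alignment-grid recurrence D(0,0) = 0, D(i,0) = D(0,j) = ∞ for i,j ≥ 1, and D(i,j) = w(i,j) + min(D(i-1,j), D(i,j-1), D(i-1,j-1)). -/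
/-- The alignment-grid dynamic program: `gridD w i j` is the value `D(i,j)`
defined by `D(0,0) = 0`, `D(i,0) = D(0,j) = ∞` for `i,j ≥ 1`, and
`D(i,j) = w(i,j) + min(D(i-1,j), D(i,j-1), D(i-1,j-1))`. -/
noncomputable def gridD (w : ℕ → ℕ → NNReal) : ℕ → ℕ → ENNReal
  | 0, 0 => 0
  | _ + 1, 0 => ⊤
  | 0, _ + 1 => ⊤
  | i + 1, j + 1 =>
      (w (i + 1) (j + 1) : ENNReal) +
        min (min (gridD w i (j + 1)) (gridD w (i + 1) j)) (gridD w i j)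

/-!
Two equal-length warps of `S ++ [a]` and `T ++ [b]` end in `a` and `b`, and dropping these last
letters leaves a warp of `S` or of `S ++ [a]`, and one of `T` or of `T ++ [b]`. Three of the four
combinations give the three terms of the grid recurrence for `DTW` on prefixes; in the fourth the
dropped pair can be discarded because costs are nonnegative, and one inducts on the warp length.
-/

section

open List

variable {α : Type*}

theorem List.sum_zipWith_concat_concat {β M : Type*} [AddMonoid M] (f : α → β → M)
    {l₁ : List α} {l₂ : List β} (h : l₁.length = l₂.length) (a : α) (b : β) :
    (zipWith f (l₁ ++ [a]) (l₂ ++ [b])).sum = (zipWith f l₁ l₂).sum + f a b := by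
  simp [zipWith_append h]

theorem IsTimeWarp.length_le {S S' : List α} (h : IsTimeWarp S S') : S.length ≤ S'.length := by
  obtain ⟨ℓ, hlen, hpos, rfl⟩ := h
  induction ℓ generalizing S with
  | nil => simp_all
  | cons k ℓ ih =>
    cases S with
    | nil => simp at hlen
    | cons a S =>
      have := ih (by simpa using hlen) (fun x hx => hpos x (mem_cons_of_mem k hx))
      have := hpos k mem_cons_self
      simp only [zipWith_cons_cons, flatten_cons, length_append, length_cons, length_replicate]
      omega

theorem isTimeWarp_nil_left {S' : List α} : IsTimeWarp [] S' ↔ S' = [] := by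
  constructor
  · rintro ⟨ℓ, hlen, -, rfl⟩
    simp_all
  · rintro rfl
    exact ⟨[], rfl, by simp, rfl⟩

theorem isTimeWarp_concat_iff {S S' : List α} {a : α} :
    IsTimeWarp (S ++ [a]) S' ↔ ∃ S'' k, 0 < k ∧ IsTimeWarp S S'' ∧ S' = S'' ++ replicate k a := by
  constructor
  · rintro ⟨ℓ, hlen, hpos, rfl⟩
    obtain rfl | ⟨ℓ, k, rfl⟩ := ℓ.eq_nil_or_concat'
    · simp at hlen
    have hlen : ℓ.length = S.length := by simpa using hlen
    refine ⟨_, k, hpos k (by simp), ⟨ℓ, hlen, fun x hx => hpos x (by simp [hx]), rfl⟩, ?_⟩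
    simp [zipWith_append hlen]
  · rintro ⟨-, k, hk, ⟨ℓ, hlen, hpos, rfl⟩, rfl⟩
    refine ⟨ℓ ++ [k], by simp [hlen], ?_, by simp [zipWith_append hlen]⟩
    simpa [or_imp, forall_and] using ⟨hpos, hk⟩

theorem isTimeWarp_concat_concat_iff {S S' : List α} {a b : α} :
    IsTimeWarp (S ++ [a]) (S' ++ [b]) ↔ b = a ∧ (IsTimeWarp S S' ∨ IsTimeWarp (S ++ [a]) S') := by
  simp only [isTimeWarp_concat_iff]
  constructor
  · rintro ⟨S'', k, hk, hS'', h⟩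
    obtain ⟨k, rfl⟩ := Nat.exists_eq_succ_of_ne_zero hk.ne'
    rw [replicate_succ', ← append_assoc] at h
    obtain ⟨rfl, hba⟩ := append_inj' h rfl
    refine ⟨by simpa using hba, ?_⟩
    rcases k with _ | k
    · simpa using Or.inl hS''
    · exact Or.inr ⟨S'', k + 1, k.succ_pos, hS'', rfl⟩
  · rintro ⟨rfl, hS'' | ⟨S'', k, hk, hS'', rfl⟩⟩
    · exact ⟨S', 1, one_pos, hS'', rfl⟩
    · exact ⟨S'', k + 1, k.succ_pos, hS'', by simp [replicate_succ']⟩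

variable (δ : α → α → NNReal)

theorem dtw_le_sum_s1 {S T S' T' : List α} (hS : IsTimeWarp S S') (hT : IsTimeWarp T T')
    (hlen : S'.length = T'.length) : DTW δ S T ≤ ((zipWith δ S' T').sum : ENNReal) :=
  iInf₂_le (S', T') ⟨hS, hT, hlen⟩

theorem le_dtw {S T : List α} {c : ENNReal}
    (h : ∀ S' T', IsTimeWarp S S' → IsTimeWarp T T' → S'.length = T'.length →
      c ≤ ((zipWith δ S' T').sum : ENNReal)) : c ≤ DTW δ S T :=
  le_iInf₂ fun p ⟨hS, hT, hlen⟩ => h p.1 p.2 hS hT hlen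

theorem dtw_nil_nil : DTW δ [] [] = 0 :=
  nonpos_iff_eq_zero.1 <| by
    simpa using dtw_le_sum_s1 δ (isTimeWarp_nil_left.2 rfl) (isTimeWarp_nil_left.2 rfl) rfl

theorem dtw_nil_left {T : List α} (hT : T ≠ []) : DTW δ [] T = ⊤ :=
  top_le_iff.1 <| le_dtw δ fun S' T' hS' hT' hlen => by
    have := hT'.length_le
    rw [← hlen, isTimeWarp_nil_left.1 hS', length_nil, Nat.le_zero, length_eq_zero_iff] at this
    exact absurd this hT

theorem dtw_nil_right {S : List α} (hS : S ≠ []) : DTW δ S [] = ⊤ :=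
  top_le_iff.1 <| le_dtw δ fun S' T' hS' hT' hlen => by
    have := hS'.length_le
    rw [hlen, isTimeWarp_nil_left.1 hT', length_nil, Nat.le_zero, length_eq_zero_iff] at this
    exact absurd this hS

theorem dtw_concat_concat_le_add {S T U V : List α} {a b : α} (hU : U = S ∨ U = S ++ [a])
    (hV : V = T ∨ V = T ++ [b]) : DTW δ (S ++ [a]) (T ++ [b]) ≤ δ a b + DTW δ U V := by
  rw [← tsub_le_iff_left]
  refine le_dtw δ fun U' V' hU' hV' hlen => tsub_le_iff_left.2 ?_
  have hSU' : IsTimeWarp (S ++ [a]) (U' ++ [a]) :=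
    isTimeWarp_concat_concat_iff.2 ⟨rfl, by rcases hU with rfl | rfl <;> simp [hU']⟩
  have hTV' : IsTimeWarp (T ++ [b]) (V' ++ [b]) :=
    isTimeWarp_concat_concat_iff.2 ⟨rfl, by rcases hV with rfl | rfl <;> simp [hV']⟩
  calc DTW δ (S ++ [a]) (T ++ [b]) ≤ ((zipWith δ (U' ++ [a]) (V' ++ [b])).sum : ENNReal) :=
        dtw_le_sum_s1 δ hSU' hTV' (by simpa using hlen)
    _ = δ a b + ((zipWith δ U' V').sum : ENNReal) := by
        rw [sum_zipWith_concat_concat δ hlen, ENNReal.coe_add, add_comm]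

theorem add_min_dtw_le_sum {S T S' T' : List α} {a b : α} (hS : IsTimeWarp (S ++ [a]) S')
    (hT : IsTimeWarp (T ++ [b]) T') (hlen : S'.length = T'.length) :
    δ a b + min (min (DTW δ S (T ++ [b])) (DTW δ (S ++ [a]) T)) (DTW δ S T) ≤
      ((zipWith δ S' T').sum : ENNReal) := by
  induction S' using List.reverseRecOn generalizing T' with
  | nil => exact absurd hS.length_le (by simp)
  | append_singleton U x ih =>
    obtain rfl | ⟨V, y, rfl⟩ := T'.eq_nil_or_concat'
    · simp at hlen
    have hUV : U.length = V.length := by simpa using hlen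
    obtain ⟨rfl, hU⟩ := isTimeWarp_concat_concat_iff.1 hS
    obtain ⟨rfl, hV⟩ := isTimeWarp_concat_concat_iff.1 hT
    rw [sum_zipWith_concat_concat δ hUV, ENNReal.coe_add, add_comm]
    gcongr
    rcases hU with hU | hU <;> rcases hV with hV | hV
    · exact (min_le_right _ _).trans (dtw_le_sum_s1 δ hU hV hUV)
    · exact ((min_le_left _ _).trans (min_le_left _ _)).trans (dtw_le_sum_s1 δ hU hV hUV)
    · exact ((min_le_left _ _).trans (min_le_right _ _)).trans (dtw_le_sum_s1 δ hU hV hUV)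
    · exact le_add_self.trans (ih hU hV hUV)

theorem dtw_concat_concat (S T : List α) (a b : α) :
    DTW δ (S ++ [a]) (T ++ [b]) =
      δ a b + min (min (DTW δ S (T ++ [b])) (DTW δ (S ++ [a]) T)) (DTW δ S T) := by
  refine le_antisymm ?_ (le_dtw δ fun S' T' => add_min_dtw_le_sum δ)
  rw [← tsub_le_iff_left]
  refine le_min (le_min ?_ ?_) ?_ <;> rw [tsub_le_iff_left] <;>
    exact dtw_concat_concat_le_add δ (by simp) (by simp)

theorem dtw_take_take_eq_gridD {S T : List α} {w : ℕ → ℕ → NNReal}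
    (hw : ∀ (i : Fin S.length) (j : Fin T.length),
      w ((i : ℕ) + 1) ((j : ℕ) + 1) = δ (S.get i) (T.get j)) (i j : ℕ) :
    i ≤ S.length → j ≤ T.length → DTW δ (S.take i) (T.take j) = gridD w i j := by
  fun_induction gridD w i j with
  | case1 =>
    intro _ _
    simpa using dtw_nil_nil δ
  | case2 i =>
    intro hi _
    rw [take_zero, dtw_nil_right δ (ne_nil_of_length_pos (by rw [length_take]; omega))]
  | case3 j =>
    intro _ hj
    rw [take_zero, dtw_nil_left δ (ne_nil_of_length_pos (by rw [length_take]; omega))]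
  | case4 i j ih₁ ih₂ ih₃ =>
    intro (hi : i < S.length) (hj : j < T.length)
    have hwij : w (i + 1) (j + 1) = δ S[i] T[j] := by simpa using hw ⟨i, hi⟩ ⟨j, hj⟩
    rw [Nat.succ_eq_add_one, Nat.succ_eq_add_one, ← ih₁ hi.le hj, ← ih₂ hi hj.le,
      ← ih₃ hi.le hj.le, hwij, take_succ_eq_append_getElem hi, take_succ_eq_append_getElem hj]
    exact dtw_concat_concat δ _ _ _ _

end

theorem dtw_eq_gridD_general {α : Type*} (δ : α → α → NNReal) (S T : List α) (w : ℕ → ℕ → NNReal)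
    (hw : ∀ (i : Fin S.length) (j : Fin T.length),
      w ((i : ℕ) + 1) ((j : ℕ) + 1) = δ (S.get i) (T.get j)) :
    DTW δ S T = gridD w S.length T.length := by
  simpa using dtw_take_take_eq_gridD δ hw S.length T.length le_rfl le_rfl

theorem dtw_eq_gridD {α : Type*} (δ : α → α → NNReal) (S T : List α)
    (hS : S ≠ []) (hT : T ≠ []) (w : ℕ → ℕ → NNReal)
    (hw : ∀ (i : Fin S.length) (j : Fin T.length),
      w ((i : ℕ) + 1) ((j : ℕ) + 1) = δ (S.get i) (T.get j)) :
    DTW δ S T = gridD w S.length T.length :=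
  dtw_eq_gridD_general δ S T w hw
end
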